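/- arXiv:1408.2405 — 3 statements merged into one kernel-verified Lean document; each statement's English description precedes it below -/
import Mathlib

section
/- Fix α, λ ∈ ℝ with λ ≠ 0 and fix n. Let x_{n−1}, x_n, x_{n+1}, x̃_{n−1}, x̃_n, p_{n−1}, p_n ∈ ℝ satisfy, for m ∈ {n−1, n}, the relation e^{p_m} = ((e^{x̃_m − x_m} − 1)/λ) · ((1 + λ e^{x_m − x̃_{m−1}})/(1 + α e^{x_m − x̃_{m−1}})) · ((1 + α e^{x_m − x_{m−1}})/(1 + α e^{x_{m+1} − x_m})) (with all denominators nonzero). Define γ_m = e^{x̃_m − x_m}(1 + λ e^{x_m − x̃_{m−1}}) · ((1 + α e^{x_{m+1} − x̃_m})/(1 + α e^{x_{m+1} − x_m})) · ((1 + α e^{x_m − x_{m−1}})/(1 + α e^{x_m − x̃_{m−1}})). Then (1 + λ(e^{p_n} + e^{x_n − x_{n−1}}))·γ_{n−1} − λ(λ−α)·e^{x_n − x_{n−1} + p_{n−1}} = γ_{n−1}·γ_n. -/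
/-!
Both the multiplier `γ_m` and `λ e^{p_m}` are multiples of one factor `K_m`:
`γ_m = (e^{x̃_m - x_m} + α e^{x_{m+1} - x_m}) K_m` and `λ e^{p_m} = (e^{x̃_m - x_m} - 1) K_m`.
Hence `γ_n - λ e^{p_n}` no longer involves `x̃_n` or `x_{n+1}`, and after dividing by `K_{n-1}`
the claim becomes a rational identity in `e^{x̃_{n-1} - x_{n-1}}` and `e^{x_n - x_{n-1}}` alone.
-/

open Real

namespace ModifiedExpToda

variable (a l : ℝ) (x xt : ℤ → ℝ)

noncomputable def multiplier (m : ℤ) : ℝ :=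
  exp (xt m - x m) * (1 + l * exp (x m - xt (m - 1)))
    * ((1 + a * exp (x (m + 1) - xt m)) / (1 + a * exp (x (m + 1) - x m)))
    * ((1 + a * exp (x m - x (m - 1))) / (1 + a * exp (x m - xt (m - 1))))

noncomputable def expMomentum (m : ℤ) : ℝ :=
  ((exp (xt m - x m) - 1) / l)
    * ((1 + l * exp (x m - xt (m - 1))) / (1 + a * exp (x m - xt (m - 1))))
    * ((1 + a * exp (x m - x (m - 1))) / (1 + a * exp (x (m + 1) - x m)))

noncomputable def commonFactor (m : ℤ) : ℝ :=
  (1 + l * exp (x m - xt (m - 1))) / (1 + a * exp (x m - xt (m - 1)))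
    * ((1 + a * exp (x m - x (m - 1))) / (1 + a * exp (x (m + 1) - x m)))

variable {a l x xt}

lemma exp_sub_eq_exp_sub_div_exp_sub (b c d : ℝ) : exp (b - c) = exp (b - d) / exp (c - d) := by
  rw [← Real.exp_sub]
  ring_nf

lemma multiplier_eq (m : ℤ) :
    multiplier a l x xt m
      = (exp (xt m - x m) + a * exp (x (m + 1) - x m)) * commonFactor a l x xt m := by
  rw [multiplier, commonFactor, exp_sub_eq_exp_sub_div_exp_sub (x (m + 1)) (xt m) (x m)]
  field_simp

lemma mul_expMomentum (hl : l ≠ 0) (m : ℤ) :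
    l * expMomentum a l x xt m = (exp (xt m - x m) - 1) * commonFactor a l x xt m := by
  rw [expMomentum, commonFactor]
  field_simp

lemma multiplier_sub_mul_expMomentum (hl : l ≠ 0) {m : ℤ}
    (hden : 1 + a * exp (x (m + 1) - x m) ≠ 0) :
    multiplier a l x xt m - l * expMomentum a l x xt m
      = (1 + l * exp (x m - xt (m - 1))) / (1 + a * exp (x m - xt (m - 1)))
          * (1 + a * exp (x m - x (m - 1))) := by
  rw [multiplier_eq, mul_expMomentum hl, commonFactor]
  field_simp
  ring

lemma shift_mul_one_add_sub_multiplier_sub (hl : l ≠ 0) {m : ℤ}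
    (hden₁ : 1 + a * exp (x m - xt (m - 1)) ≠ 0) (hden₂ : 1 + a * exp (x (m + 1) - x m) ≠ 0) :
    (exp (xt (m - 1) - x (m - 1)) + a * exp (x m - x (m - 1)))
        * (1 + l * exp (x m - x (m - 1)) - (multiplier a l x xt m - l * expMomentum a l x xt m))
      = (l - a) * exp (x m - x (m - 1)) * (exp (xt (m - 1) - x (m - 1)) - 1) := by
  rw [multiplier_sub_mul_expMomentum hl hden₂]
  have hr : exp (xt (m - 1) - x (m - 1)) ≠ 0 := (exp_pos _).ne'
  rw [exp_sub_eq_exp_sub_div_exp_sub (x m) (xt (m - 1)) (x (m - 1)), ← mul_div_assoc,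
    one_add_div hr] at hden₁ ⊢
  have hrq := (div_ne_zero_iff.mp hden₁).1
  field_simp
  ring

theorem multiplier_covariance (hl : l ≠ 0) {n : ℤ}
    (hden₁ : 1 + a * exp (x n - xt (n - 1)) ≠ 0) (hden₂ : 1 + a * exp (x (n + 1) - x n) ≠ 0) :
    (1 + l * (expMomentum a l x xt n + exp (x n - x (n - 1)))) * multiplier a l x xt (n - 1)
        - l * (l - a) * (exp (x n - x (n - 1)) * expMomentum a l x xt (n - 1))
      = multiplier a l x xt (n - 1) * multiplier a l x xt n := by
  have hγ : multiplier a l x xt (n - 1)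
      = (exp (xt (n - 1) - x (n - 1)) + a * exp (x n - x (n - 1)))
          * commonFactor a l x xt (n - 1) := by
    rw [multiplier_eq, sub_add_cancel]
  have hp := mul_expMomentum (a := a) (x := x) (xt := xt) hl (n - 1)
  have key := shift_mul_one_add_sub_multiplier_sub hl hden₁ hden₂
  rw [hγ]
  linear_combination commonFactor a l x xt (n - 1) * key - (l - a) * exp (x n - x (n - 1)) * hp

end ModifiedExpToda

open ModifiedExpToda in
/-- The covariance relation for the transfer matrix `U_n(x,p;λ)` of the
modified exponential relativistic Toda lattice: the top row acting on `(γ_{n−1},1)ᵀ`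
produces `γ_{n−1}·γ_n`. -/
theorem modified_exp_transfer_covariance
    (a l : ℝ) (hl : l ≠ 0) (x xt p γ : ℤ → ℝ) (n : ℤ)
    (hγ : ∀ m : ℤ, γ m
      = Real.exp (xt m - x m) * (1 + l * Real.exp (x m - xt (m - 1)))
        * ((1 + a * Real.exp (x (m + 1) - xt m)) / (1 + a * Real.exp (x (m + 1) - x m)))
        * ((1 + a * Real.exp (x m - x (m - 1))) / (1 + a * Real.exp (x m - xt (m - 1)))))
    (hp : ∀ m : ℤ, m = n - 1 ∨ m = n →
      Real.exp (p m)
        = ((Real.exp (xt m - x m) - 1) / l)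
          * ((1 + l * Real.exp (x m - xt (m - 1))) / (1 + a * Real.exp (x m - xt (m - 1))))
          * ((1 + a * Real.exp (x m - x (m - 1))) / (1 + a * Real.exp (x (m + 1) - x m))))
    (hden1 : ∀ m : ℤ, m = n - 1 ∨ m = n → 1 + a * Real.exp (x m - xt (m - 1)) ≠ 0)
    (hden2 : ∀ m : ℤ, m = n - 1 ∨ m = n → 1 + a * Real.exp (x (m + 1) - x m) ≠ 0) :
    (1 + l * (Real.exp (p n) + Real.exp (x n - x (n - 1)))) * γ (n - 1)
        - l * (l - a) * Real.exp (x n - x (n - 1) + p (n - 1))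
      = γ (n - 1) * γ n := by
  obtain rfl : γ = multiplier a l x xt := funext hγ
  have hpCur : Real.exp (p n) = expMomentum a l x xt n := hp n (.inr rfl)
  have hpPrev : Real.exp (p (n - 1)) = expMomentum a l x xt (n - 1) := hp (n - 1) (.inl rfl)
  rw [Real.exp_add, hpCur, hpPrev]
  exact multiplier_covariance hl (hden1 n (.inr rfl)) (hden2 n (.inr rfl))
end

section
/- Let 𝔐, 𝔏 : ℝ^N × ℝ^N × ℝ → ℝ be C¹ functions. Let x, x̂ ∈ ℝ^N be fixed, and let x̃(λ), x̂̃(λ) : ℝ → ℝ^N be differentiable curves. Assume: (i) the closure relation 𝔐(x, x̃(λ); λ) + 𝔏(x̃(λ), x̂̃(λ); μ) − 𝔐(x̂, x̂̃(λ); λ) − 𝔏(x, x̂; μ) = 0 holds for all λ in an open interval; (ii) the corner equations ∇_{x̃}[𝔐(x, x̃; λ) + 𝔏(x̃, x̂̃(λ); μ)]|_{x̃ = x̃(λ)} = 0 and ∇_{x̂̃}[𝔏(x̃(λ), x̂̃; μ) − 𝔐(x̂, x̂̃; λ)]|_{x̂̃ = x̂̃(λ)} = 0 hold for all λ in that interval.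 Then ∂𝔐/∂λ(x̂, x̂̃(λ); λ) = ∂𝔐/∂λ(x, x̃(λ); λ) for all λ in the interval. -/
/-!
The left-hand side of the closure relation is `G(λ, x̃(λ), x̂̃(λ))` for
`G(λ, y, z) = 𝔐(x, y; λ) + 𝔏(y, z; μ) - 𝔐(x̂, z; λ) - 𝔏(x, x̂; μ)`, and the corner equations say
that `(x̃(λ), x̂̃(λ))` is a critical point of `G(λ, ·, ·)`. By the envelope theorem the total
`λ`-derivative of `G` along the curve is then its partial `λ`-derivative
`∂𝔐/∂λ(x, x̃; λ) - ∂𝔐/∂λ(x̂, x̂̃; λ)`, which vanishes because the closure relation holds on an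
open set.
-/

open Filter Topology ContinuousLinearMap

section Partial

variable {𝕜 E₁ E₂ F : Type*} [NontriviallyNormedField 𝕜] [NormedAddCommGroup E₁]
  [NormedSpace 𝕜 E₁] [NormedAddCommGroup E₂] [NormedSpace 𝕜 E₂] [NormedAddCommGroup F]
  [NormedSpace 𝕜 F] {f : E₁ × E₂ → F} {a : E₁} {b : E₂}

theorem DifferentiableAt.fderiv_prodMk_left_eq (hf : DifferentiableAt 𝕜 f (a, b)) :
    fderiv 𝕜 (fun y => f (y, b)) a = fderiv 𝕜 f (a, b) ∘L inl 𝕜 E₁ E₂ :=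
  (hf.hasFDerivAt.comp a (hasFDerivAt_prodMk_left a b)).fderiv

theorem DifferentiableAt.fderiv_prodMk_right_eq (hf : DifferentiableAt 𝕜 f (a, b)) :
    fderiv 𝕜 (fun z => f (a, z)) b = fderiv 𝕜 f (a, b) ∘L inr 𝕜 E₁ E₂ :=
  (hf.hasFDerivAt.comp b (hasFDerivAt_prodMk_right a b)).fderiv

theorem DifferentiableAt.fderiv_eq_coprod (hf : DifferentiableAt 𝕜 f (a, b)) :
    fderiv 𝕜 f (a, b) =
      (fderiv 𝕜 (fun y => f (y, b)) a).coprod (fderiv 𝕜 (fun z => f (a, z)) b) := by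
  rw [hf.fderiv_prodMk_left_eq, hf.fderiv_prodMk_right_eq, coprod_comp_inl_inr]

theorem DifferentiableAt.fderiv_eq_zero_of_fderiv_prodMk_eq_zero
    (hf : DifferentiableAt 𝕜 f (a, b)) (h₁ : fderiv 𝕜 (fun y => f (y, b)) a = 0)
    (h₂ : fderiv 𝕜 (fun z => f (a, z)) b = 0) : fderiv 𝕜 f (a, b) = 0 := by
  rw [hf.fderiv_eq_coprod, h₁, h₂]
  ext <;> simp

end Partial

section Envelope

variable {𝕜 E F : Type*} [NontriviallyNormedField 𝕜] [NormedAddCommGroup E] [NormedSpace 𝕜 E]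
  [NormedAddCommGroup F] [NormedSpace 𝕜 F]

theorem hasDerivAt_comp_prodMk_of_fderiv_snd_eq_zero {G : 𝕜 × E → F} {γ : 𝕜 → E} {t : 𝕜}
    (hG : DifferentiableAt 𝕜 G (t, γ t)) (hγ : DifferentiableAt 𝕜 γ t)
    (hcrit : fderiv 𝕜 (fun y => G (t, y)) (γ t) = 0) :
    HasDerivAt (fun s => G (s, γ s)) (deriv (fun s => G (s, γ t)) t) t := by
  set D := fderiv 𝕜 G (t, γ t)
  have hchain : HasDerivAt (fun s => G (s, γ s)) (D (1, deriv γ t)) t :=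
    hG.hasFDerivAt.comp_hasDerivAt t ((hasDerivAt_id t).prodMk hγ.hasDerivAt)
  have hvert : D (0, deriv γ t) = 0 := by
    simpa [hG.fderiv_prodMk_right_eq] using congr($hcrit (deriv γ t))
  refine hchain.congr_deriv ?_
  calc D (1, deriv γ t) = D (1, 0) + D (0, deriv γ t) := by
        rw [← map_add, Prod.mk_add_mk, add_zero, zero_add]
    _ = D (1, 0) := by rw [hvert, add_zero]
    _ = deriv (fun s => G (s, γ t)) t := by
        rw [← fderiv_apply_one_eq_deriv, hG.fderiv_prodMk_left_eq]; rfl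

end Envelope

/-- abstract spectrality: differentiating the closure relation in the
Bäcklund parameter λ and using the corner (criticality) equations shows that
`P_G = ∂𝔐/∂λ` is invariant under the map `x ↦ x̂`. -/
theorem abstract_spectrality
    (N : ℕ) (M L : (Fin N → ℝ) → (Fin N → ℝ) → ℝ → ℝ)
    (hM : ContDiff ℝ 1 (fun q : (Fin N → ℝ) × (Fin N → ℝ) × ℝ => M q.1 q.2.1 q.2.2))
    (hL : ContDiff ℝ 1 (fun q : (Fin N → ℝ) × (Fin N → ℝ) × ℝ => L q.1 q.2.1 q.2.2))
    (x xh : Fin N → ℝ) (xt xht : ℝ → Fin N → ℝ)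
    (hxt : Differentiable ℝ xt) (hxht : Differentiable ℝ xht)
    (μ : ℝ) (s : Set ℝ) (hs : IsOpen s)
    (hclos : ∀ l ∈ s,
      M x (xt l) l + L (xt l) (xht l) μ - M xh (xht l) l - L x xh μ = 0)
    (hc1 : ∀ l ∈ s, fderiv ℝ (fun y => M x y l + L y (xht l) μ) (xt l) = 0)
    (hc2 : ∀ l ∈ s, fderiv ℝ (fun y => L (xt l) y μ - M xh y l) (xht l) = 0) :
    ∀ l ∈ s, deriv (fun t => M xh (xht l) t) l = deriv (fun t => M x (xt l) t) l := by
  intro l hl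
  set Mf := fun q : (Fin N → ℝ) × (Fin N → ℝ) × ℝ => M q.1 q.2.1 q.2.2
  set Lf := fun q : (Fin N → ℝ) × (Fin N → ℝ) × ℝ => L q.1 q.2.1 q.2.2
  have hMf : Differentiable ℝ Mf := hM.differentiable one_ne_zero
  have hLf : Differentiable ℝ Lf := hL.differentiable one_ne_zero
  -- Bracketed so that the `x̂̃`-slice is literally a constant plus the function in `hc2`.
  set G : ℝ × (Fin N → ℝ) × (Fin N → ℝ) → ℝ :=
    fun p => Mf (x, p.2.1, p.1) + (Lf (p.2.1, p.2.2, μ) - Mf (xh, p.2.2, p.1))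
  have hG : Differentiable ℝ G := by fun_prop
  have hcrit : fderiv ℝ (fun y => G (l, y)) (xt l, xht l) = 0 := by
    have hcorner₁ : (fun y => G (l, (y, xht l))) =
        fun y => (M x y l + L y (xht l) μ) - M xh (xht l) l := by
      funext y; simp only [G, Mf, Lf]; ring
    have hslice : DifferentiableAt ℝ (fun y => G (l, y)) (xt l, xht l) := by fun_prop
    refine hslice.fderiv_eq_zero_of_fderiv_prodMk_eq_zero ?_ ?_
    · rw [hcorner₁, fderiv_sub_const, hc1 l hl]
    · exact (fderiv_const_add (M x (xt l) l)).trans (hc2 l hl)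
  have henv := hasDerivAt_comp_prodMk_of_fderiv_snd_eq_zero (γ := fun s => (xt s, xht s))
    (hG _) (by fun_prop) hcrit
  have hconst : (fun s => G (s, (xt s, xht s))) =ᶠ[𝓝 l] fun _ => L x xh μ := by
    filter_upwards [hs.mem_nhds hl] with t ht
    linarith [hclos t ht]
  have hpartial : HasDerivAt (fun s => G (s, (xt l, xht l)))
      (deriv (fun t => M x (xt l) t) l - deriv (fun t => M xh (xht l) t) l) l := by
    have h₁ : DifferentiableAt ℝ (fun t => Mf (x, xt l, t)) l := by fun_prop
    have h₂ : DifferentiableAt ℝ (fun t => Mf (xh, xht l, t)) l := by fun_prop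
    exact (h₁.hasDerivAt.add
      ((hasDerivAt_const l (L (xt l) (xht l) μ)).sub h₂.hasDerivAt)).congr_deriv (by ring)
  have hzero := henv.unique ((hasDerivAt_const l _).congr_of_eventuallyEq hconst)
  linarith [hpartial.deriv]
end

section
/- Fix α, λ ∈ ℝ with λ ≠ 0, λ + α ≠ 0, and fix n. Let x_n, x̃_{n−1}, x̃_n, p_n ∈ ℝ satisfy the first equation of the map G_k for the modified exponential system: e^{p_n} = [λ^{-1}(e^{x̃_n − x_n} − 1)/(1 − λ^{-1}α(e^{x̃_n − x_n} − 1))]·(1 + (λ+α)e^{x_n − x̃_{n−1}}), with all denominators nonzero. Define β_m = [e^{x̃_m − x_m}/(1 − (α/λ)(e^{x̃_m − x_m} − 1))]·(1 + (λ+α)e^{x_m − x̃_{m−1}}) for m ∈ {n−1, n}, and let U_n(x, p; ν) be the 2×2 matrix with rows (1 + ν(e^{p_n} + e^{x_n − x_{n−1}}), −ν(ν−α)e^{x_n − x_{n−1} + p_{n−1}}) and (1, 0). Then, assuming additionally the analogous relations at index n−1 and at the neighboring sites needed to define all quantities, one has U_n(x, p; λ+α)·(β_{n−1}, 1)ᵀ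 = β_{n−1}·(β_n, 1)ᵀ, i.e., (1 + (λ+α)(e^{p_n} + e^{x_n − x_{n−1}}))·β_{n−1} − (λ+α)λ·e^{x_n − x_{n−1} + p_{n−1}} = β_{n−1}·β_n. -/
/-- The covariance relation for the second family `G_k` of Bäcklund
transformations of the modified exponential relativistic Toda lattice: the transfer
matrix at shifted spectral parameter `λ+α` maps `(β_{n−1},1)ᵀ` to `β_{n−1}·(β_n,1)ᵀ`. -/
theorem modified_exp_transfer_covariance_G
    (a l : ℝ) (hl : l ≠ 0) (hla : l + a ≠ 0) (x xt p β : ℤ → ℝ) (n : ℤ)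
    (hβ : ∀ m : ℤ, β m
      = (Real.exp (xt m - x m) / (1 - (a / l) * (Real.exp (xt m - x m) - 1)))
        * (1 + (l + a) * Real.exp (x m - xt (m - 1))))
    (hp : ∀ m : ℤ, m = n - 1 ∨ m = n →
      Real.exp (p m)
        = (l⁻¹ * (Real.exp (xt m - x m) - 1)
            / (1 - l⁻¹ * a * (Real.exp (xt m - x m) - 1)))
          * (1 + (l + a) * Real.exp (x m - xt (m - 1))))
    (hden : ∀ m : ℤ, m = n - 1 ∨ m = n →
      1 - l⁻¹ * a * (Real.exp (xt m - x m) - 1) ≠ 0) :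
    (1 + (l + a) * (Real.exp (p n) + Real.exp (x n - x (n - 1)))) * β (n - 1)
        - (l + a) * l * Real.exp (x n - x (n - 1) + p (n - 1))
      = β (n - 1) * β n := by
  have h1 := hβ (n-1)
  have h2 := hβ n
  have h3 := hp (n-1) (Or.inl rfl)
  have h4 := hp n (Or.inr rfl)
  have hd1 := hden (n-1) (Or.inl rfl)
  have hd2 := hden n (Or.inr rfl)
  have hexp1 : Real.exp (x n - x (n-1))
      = Real.exp (xt (n-1) - x (n-1)) * Real.exp (x n - xt (n-1)) := by
    rw [← Real.exp_add]; ring_nf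
  have hexp2 : Real.exp (x n - x (n-1) + p (n-1))
      = Real.exp (x n - x (n-1)) * Real.exp (p (n-1)) := Real.exp_add _ _
  rw [h1, h2, h4, hexp2, h3, hexp1]
  set E1 := Real.exp (xt (n-1) - x (n-1)) with hE1
  set E2 := Real.exp (xt n - x n) with hE2
  set F := Real.exp (x n - xt (n-1)) with hF
  set G := Real.exp (x (n-1) - xt (n-1-1)) with hG
  have hD1 : l - a * (E1 - 1) ≠ 0 := by
    intro h; apply hd1; field_simp; linarith
  have hD2 : l - a * (E2 - 1) ≠ 0 := by
    intro h; apply hd2; field_simp; linarith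
  have e1 : 1 - a / l * (E1 - 1) = (l - a * (E1 - 1)) / l := by field_simp
  have e2 : 1 - a / l * (E2 - 1) = (l - a * (E2 - 1)) / l := by field_simp
  have e3 : 1 - l⁻¹ * a * (E1 - 1) = (l - a * (E1 - 1)) / l := by field_simp
  have e4 : 1 - l⁻¹ * a * (E2 - 1) = (l - a * (E2 - 1)) / l := by field_simp
  rw [e1, e2, e3, e4]
  field_simp
  ring
end
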